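/- Let T be a finite tree, S ⊆ V(T), and run the path-breaking process on T with some ordering of the edges: delete an edge if it lies on a path between two distinct vertices of S in the current forest. Let H ⊆ V(T) contain S, and let T' be the smallest subtree of T spanning H. Then the path-breaking process on T' with the induced edge ordering deletes exactly the same edges as the process on T, and for any u,w ∈ H, u and w are connected in the final forest of T if and only if they are connected in the final forest of T'. -/
import Mathlib


open SimpleGraph

variable {V : Type*}

-- The path-breaking process on a forest `T` with starting set `S` and edge ordering
-- `ed`: at step `i`, delete the edge `ed i` if it lies on a path between two distinct
-- vertices of `S` in the current forest.
open scoped Classical in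
noncomputable def pathBreak (S : Set V) (ed : ℕ → Sym2 V)
    (T : SimpleGraph V) : ℕ → SimpleGraph V
  | 0 => T
  | i + 1 =>
    let H := pathBreak S ed T i
    if ∃ u ∈ S, ∃ v ∈ S, u ≠ v ∧ ∃ p : H.Walk u v, p.IsPath ∧ ed i ∈ p.edges
    then H.deleteEdges {ed i}
    else H

/-- The smallest subtree of `T` spanning the vertex set `H`: the union of all paths of
`T` between pairs of vertices of `H`. -/
def hull (T : SimpleGraph V) (H : Set V) : SimpleGraph V :=
  SimpleGraph.fromEdgeSet
    {e | e ∈ T.edgeSet ∧ ∃ u ∈ H, ∃ w ∈ H, ∃ p : T.Walk u w, p.IsPath ∧ e ∈ p.edges}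

/-- `ed` lists, injectively, the `m` edges of the graph `T`. -/
def ListsEdges (T : SimpleGraph V) (m : ℕ) (ed : ℕ → Sym2 V) : Prop :=
  (∀ i < m, ed i ∈ T.edgeSet) ∧
  (∀ i j : ℕ, i < m → j < m → ed i = ed j → i = j) ∧
  (∀ e ∈ T.edgeSet, ∃ i < m, ed i = e)

lemma pathBreak_le (S : Set V) (ed : ℕ → Sym2 V) (T : SimpleGraph V) :
    ∀ i, pathBreak S ed T i ≤ T := by
  intro i
  induction i with
  | zero => exact le_refl T
  | succ i ih =>
    rw [pathBreak]
    split
    · exact le_trans (deleteEdges_le _) ih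
    · exact ih

lemma hull_le (T : SimpleGraph V) (H : Set V) : hull T H ≤ T := by
  intro u v h
  rw [hull, fromEdgeSet_adj] at h
  exact h.1.1

/-- every edge of a path between two vertices of `H` lies in the hull -/
lemma mem_hull_of_path {T : SimpleGraph V} {H : Set V} {u w : V}
    (hu : u ∈ H) (hw : w ∈ H) (p : T.Walk u w) (hp : p.IsPath) {e : Sym2 V}
    (he : e ∈ p.edges) : e ∈ (hull T H).edgeSet := by
  have heT : e ∈ T.edgeSet := p.edges_subset_edgeSet he
  rw [hull, edgeSet_fromEdgeSet]
  exact ⟨⟨heT, u, hu, w, hw, p, hp, he⟩, T.not_isDiag_of_mem_edgeSet heT⟩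

lemma edgeSet_pathBreak (S : Set V) (ed : ℕ → Sym2 V) (T : SimpleGraph V) (i : ℕ) :
    (pathBreak S ed T i).edgeSet
      = T.edgeSet \ (T.edgeSet \ (pathBreak S ed T i).edgeSet) :=
  (Set.diff_diff_cancel_left (edgeSet_mono (pathBreak_le S ed T i))).symm


/-- Let `T` be a finite tree, `S ⊆ H ⊆ V(T)`, and let `T'` be the
smallest subtree of `T` spanning `H`. Run the path-breaking process on `T`, and on `T'`
with the induced edge ordering (the same ordering; edges outside `T'` are irrelevant to
the primed process). Then at every step the two processes have deleted exactly the same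
edges, and for any `u, w ∈ H`, `u` and `w` are connected in the final forest of `T` iff
they are connected in the final forest of `T'`. -/
theorem pathBreak_hull [Fintype V] [DecidableEq V] (T : SimpleGraph V)
    (hT : T.IsTree) (S H : Set V) (hSH : S ⊆ H)
    (m : ℕ) (ed : ℕ → Sym2 V) (hed : ListsEdges T m ed) :
    (∀ i : ℕ,
      T.edgeSet \ (pathBreak S ed T i).edgeSet
        = (hull T H).edgeSet \ (pathBreak S ed (hull T H) i).edgeSet) ∧
    (∀ u ∈ H, ∀ w ∈ H,
      ((pathBreak S ed T m).Reachable u w ↔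
        (pathBreak S ed (hull T H) m).Reachable u w)) := by
  -- key: from the diff equality at step i, relate the two edge sets
  have key : ∀ i : ℕ,
      T.edgeSet \ (pathBreak S ed T i).edgeSet
        = (hull T H).edgeSet \ (pathBreak S ed (hull T H) i).edgeSet →
      ∀ e : Sym2 V, e ∈ (pathBreak S ed (hull T H) i).edgeSet ↔
        e ∈ (pathBreak S ed T i).edgeSet ∧ e ∈ (hull T H).edgeSet := by
    intro i hD e
    have h1 := edgeSet_pathBreak S ed T i
    have h2 := edgeSet_pathBreak S ed (hull T H) i
    rw [← hD] at h2
    constructor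
    · intro he
      rw [h2] at he
      refine ⟨?_, he.1⟩
      rw [h1]
      exact ⟨edgeSet_mono (hull_le T H) he.1, he.2⟩
    · intro ⟨heT, heH⟩
      rw [h2]
      rw [h1] at heT
      exact ⟨heH, heT.2⟩
  -- the walk-transfer argument in both directions, giving equality of conditions
  have cond : ∀ i : ℕ,
      T.edgeSet \ (pathBreak S ed T i).edgeSet
        = (hull T H).edgeSet \ (pathBreak S ed (hull T H) i).edgeSet →
      ( (∃ u ∈ S, ∃ v ∈ S, u ≠ v ∧
          ∃ p : (pathBreak S ed T i).Walk u v, p.IsPath ∧ ed i ∈ p.edges) ↔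
        (∃ u ∈ S, ∃ v ∈ S, u ≠ v ∧
          ∃ p : (pathBreak S ed (hull T H) i).Walk u v, p.IsPath ∧ ed i ∈ p.edges) ) := by
    intro i hD
    constructor
    · rintro ⟨u, hu, v, hv, huv, p, hp, hep⟩
      refine ⟨u, hu, v, hv, huv, ?_⟩
      have hT' : ∀ e ∈ p.edges, e ∈ T.edgeSet := fun e he =>
        edgeSet_mono (pathBreak_le S ed T i) (p.edges_subset_edgeSet he)
      have hpT : (p.transfer T hT').IsPath := by
        rw [Walk.isPath_def, Walk.support_transfer]
        exact hp.2
      have hHull : ∀ e ∈ p.edges, e ∈ (pathBreak S ed (hull T H) i).edgeSet := by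
        intro e he
        rw [key i hD e]
        refine ⟨p.edges_subset_edgeSet he, ?_⟩
        refine mem_hull_of_path (hSH hu) (hSH hv) (p.transfer T hT') hpT ?_
        rwa [Walk.edges_transfer]
      refine ⟨p.transfer _ hHull, ?_, ?_⟩
      · rw [Walk.isPath_def, Walk.support_transfer]; exact hp.2
      · rw [Walk.edges_transfer]; exact hep
    · rintro ⟨u, hu, v, hv, huv, p, hp, hep⟩
      refine ⟨u, hu, v, hv, huv, ?_⟩
      have hT' : ∀ e ∈ p.edges, e ∈ (pathBreak S ed T i).edgeSet := fun e he =>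
        ((key i hD e).mp (p.edges_subset_edgeSet he)).1
      refine ⟨p.transfer _ hT', ?_, ?_⟩
      · rw [Walk.isPath_def, Walk.support_transfer]; exact hp.2
      · rw [Walk.edges_transfer]; exact hep
  have main : ∀ i : ℕ,
      T.edgeSet \ (pathBreak S ed T i).edgeSet
        = (hull T H).edgeSet \ (pathBreak S ed (hull T H) i).edgeSet := by
    intro i
    induction i with
    | zero => simp [pathBreak]
    | succ i ih =>
      have hc := cond i ih
      rw [pathBreak, pathBreak]
      by_cases h : ∃ u ∈ S, ∃ v ∈ S, u ≠ v ∧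
          ∃ p : (pathBreak S ed T i).Walk u v, p.IsPath ∧ ed i ∈ p.edges
      · rw [if_pos h, if_pos (hc.mp h)]
        obtain ⟨u, hu, v, hv, huv, p, hp, hep⟩ := h
        have he1 : ed i ∈ (pathBreak S ed T i).edgeSet := p.edges_subset_edgeSet hep
        obtain ⟨u', hu', v', hv', huv', q, hq, heq⟩ := hc.mp ⟨u, hu, v, hv, huv, p, hp, hep⟩
        have he2 : ed i ∈ (pathBreak S ed (hull T H) i).edgeSet := q.edges_subset_edgeSet heq
        have lem : ∀ (A X : Set (Sym2 V)) (e : Sym2 V), X ⊆ A → e ∈ X →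
            A \ (X \ {e}) = (A \ X) ∪ {e} := by
          intro A X e hXA heX
          ext x
          by_cases hx : x = e
          · subst hx; simp [hXA heX, heX]
          · simp only [Set.mem_diff, Set.mem_singleton_iff, Set.mem_union, hx, not_false_iff,
              and_true, or_false]
        rw [edgeSet_deleteEdges, edgeSet_deleteEdges,
          lem _ _ _ (edgeSet_mono (pathBreak_le S ed T i)) he1,
          lem _ _ _ (edgeSet_mono (pathBreak_le S ed (hull T H) i)) he2, ih]
      · rw [if_neg h, if_neg (fun hx => h (hc.mpr hx))]
        exact ih
  refine ⟨main, ?_⟩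
  intro u hu w hw
  constructor
  · intro hr
    obtain ⟨p⟩ := hr
    obtain ⟨q, hq⟩ := p.toPath
    have hT' : ∀ e ∈ q.edges, e ∈ T.edgeSet := fun e he =>
      edgeSet_mono (pathBreak_le S ed T m) (q.edges_subset_edgeSet he)
    have hqT : (q.transfer T hT').IsPath := by
      rw [Walk.isPath_def, Walk.support_transfer]
      exact hq.2
    have hHull : ∀ e ∈ q.edges, e ∈ (pathBreak S ed (hull T H) m).edgeSet := by
      intro e he
      rw [key m (main m) e]
      refine ⟨q.edges_subset_edgeSet he, ?_⟩
      refine mem_hull_of_path hu hw (q.transfer T hT') hqT ?_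
      rwa [Walk.edges_transfer]
    exact ⟨q.transfer _ hHull⟩
  · intro hr
    refine hr.mono ?_
    rw [← edgeSet_subset_edgeSet]
    intro e he
    exact ((key m (main m) e).mp he).1
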